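/- Let G be a finite group of order m and ψ : G × G → {±1} a normalized 2-cocycle. Then M_ψ is Hadamard if and only if for every g ∈ G with g ≠ 1, the row sum Σ_{h∈G} ψ(g,h) equals 0. -/

import Mathlib

open Matrix

/-- A normalized 2-cocycle with values in `ℝ` (thought of as `{±1}`). -/
def IsCocycle {G : Type*} [Group G] (ψ : G × G → ℝ) : Prop :=
  ψ (1, 1) = 1 ∧ (∀ g : G, ψ (g, 1) = 1) ∧ (∀ g : G, ψ (1, g) = 1) ∧
    ∀ g h k : G, ψ (g, h) * ψ (g * h, k) = ψ (g, h * k) * ψ (h, k)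

/-!
Put `a = g g'⁻¹`. For a `{±1}`-valued cocycle, the cocycle identity at `(a, g', k)` gives
`ψ(g,k) ψ(g',k) = ψ(a,g') ψ(a,g'k)`, so the inner product of rows `g` and `g'` of `M_ψ` is
`±` the row sum of `a` (reindexing `k ↦ g'k`). Hence the rows are orthogonal exactly when
the row sums of all `a ≠ 1` vanish, while every row has squared norm `|G|`.
-/

namespace IsCocycle

variable {G : Type*} [Group G] {ψ : G × G → ℝ}

theorem mul_eq_mul_mul_inv (hψ : IsCocycle ψ) (hsq : ∀ p, ψ p * ψ p = 1) (g g' k : G) :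
    ψ (g, k) * ψ (g', k) = ψ (g * g'⁻¹, g') * ψ (g * g'⁻¹, g' * k) := by
  have hcoc := hψ.2.2.2 (g * g'⁻¹) g' k
  rw [inv_mul_cancel_right] at hcoc
  linear_combination ψ (g * g'⁻¹, g') * ψ (g', k) * hcoc
    - ψ (g, k) * ψ (g', k) * hsq (g * g'⁻¹, g')
    + ψ (g * g'⁻¹, g') * ψ (g * g'⁻¹, g' * k) * hsq (g', k)

theorem mul_transpose_apply [Fintype G] (hψ : IsCocycle ψ) (hsq : ∀ p, ψ p * ψ p = 1)
    (g g' : G) :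
    ((of fun g h : G => ψ (g, h)) * (of fun g h : G => ψ (g, h))ᵀ) g g'
      = ψ (g * g'⁻¹, g') * ∑ h : G, ψ (g * g'⁻¹, h) := by
  simp only [mul_apply, transpose_apply, of_apply, hψ.mul_eq_mul_mul_inv hsq, ← Finset.mul_sum]
  congr 1
  exact Fintype.sum_equiv (Equiv.mulLeft g') _ _ fun _ => rfl

end IsCocycle

/-- The cocyclic Hadamard test: for a normalized `{±1}`-valued 2-cocycle `ψ` on a
finite group `G` of order `m`, the matrix `M_ψ` is Hadamard iff every row sum
`∑_h ψ(g,h)` with `g ≠ 1` vanishes. -/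
theorem cocyclic_hadamard_test {G : Type*} [Group G] [Fintype G] [DecidableEq G]
    (ψ : G × G → ℝ) (hval : ∀ p, ψ p = 1 ∨ ψ p = -1) (hψ : IsCocycle ψ) :
    (Matrix.of fun g h : G => ψ (g, h)) * (Matrix.of fun g h : G => ψ (g, h))ᵀ
        = (Fintype.card G : ℝ) • 1 ↔
      ∀ g : G, g ≠ 1 → ∑ h : G, ψ (g, h) = 0 := by
  have hsq : ∀ p, ψ p * ψ p = 1 := fun p => mul_self_eq_one_iff.mpr (hval p)
  constructor
  · intro hM g hg
    simpa [hψ.mul_transpose_apply hsq, hψ.2.1, hg] using congrFun (congrFun hM g) 1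
  · intro hrow
    ext g g'
    rw [hψ.mul_transpose_apply hsq]
    rcases eq_or_ne g g' with rfl | hne
    · simp [hψ.2.2.1]
    · simp [hrow _ (mul_inv_eq_one.not.mpr hne), hne]
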